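/- Let B, C, D be three non-collinear points of the Euclidean plane ℝ², let O be the circumcenter and r the circumradius of triangle BCD. Let A be a point, distinct from B and from C, such that A and D lie strictly on opposite sides of the line through B and C. Then dist(A, O) < r (A is strictly inside the circumcircle of BCD) if and only if ‖B − D‖·‖C − D‖·⟨B − A, C − A⟩ + ‖B − A‖·‖C − A‖·⟨B − D, C − D⟩ < 0, where ⟨·,·⟩ is the Euclidean inner product and ‖·‖ the Euclidean norm. -/

import Mathlib

/-!
Write `X = ⟪B - A, C - A⟫`, `c₁ = cross (B - A) (C - A)` and `Y`, `c₂` for the same quantities at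
`D`, so that `X`, `c₁` are `‖B - A‖ ‖C - A‖` times the cosine and sine of the oriented angle at `A`,
and similarly at `D`. The opposite-side hypothesis says `c₁ c₂ < 0`, and expanding the in-circle
determinant gives `c₂ (|AO|² - r²) = X c₂ - c₁ Y`, i.e. the power of `A` has the sign of
`sin (δ - α) / sin δ`. For angles `α`, `δ` with sines of opposite signs this is the sign of
`cos α + cos δ`, which after clearing the norms is the division-free test.
-/

open Real EuclideanGeometry RealInnerProductSpace

namespace EuclideanSpace

def cross (u v : EuclideanSpace ℝ (Fin 2)) : ℝ := u 0 * v 1 - u 1 * v 0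

theorem inner_eq_fin_two (u v : EuclideanSpace ℝ (Fin 2)) :
    ⟪u, v⟫ = u 0 * v 0 + u 1 * v 1 := by
  simp [PiLp.inner_apply, Fin.sum_univ_two, mul_comm]

theorem norm_sq_eq_fin_two (u : EuclideanSpace ℝ (Fin 2)) : ‖u‖ ^ 2 = u 0 ^ 2 + u 1 ^ 2 := by
  rw [EuclideanSpace.norm_eq, Real.sq_sqrt (by positivity)]
  simp [Fin.sum_univ_two]

theorem dist_sq_eq_fin_two (x y : EuclideanSpace ℝ (Fin 2)) :
    dist x y ^ 2 = (x 0 - y 0) ^ 2 + (x 1 - y 1) ^ 2 := by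
  rw [dist_eq_norm, norm_sq_eq_fin_two]
  simp

theorem inner_sq_add_cross_sq (u v : EuclideanSpace ℝ (Fin 2)) :
    ⟪u, v⟫ ^ 2 + cross u v ^ 2 = ‖u‖ ^ 2 * ‖v‖ ^ 2 := by
  rw [inner_eq_fin_two, norm_sq_eq_fin_two, norm_sq_eq_fin_two, cross]
  ring

theorem cross_sub_lineMap (B C P Q : EuclideanSpace ℝ (Fin 2)) (t : ℝ) :
    cross (B - AffineMap.lineMap P Q t) (C - AffineMap.lineMap P Q t) =
      (1 - t) * cross (B - P) (C - P) + t * cross (B - Q) (C - Q) := by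
  simp only [cross, AffineMap.lineMap_apply, vsub_eq_sub, vadd_eq_add, PiLp.sub_apply,
    PiLp.add_apply, PiLp.smul_apply, smul_eq_mul]
  ring

theorem cross_sub_eq_zero_iff_mem_affineSpan_pair {B C X : EuclideanSpace ℝ (Fin 2)}
    (hBC : B ≠ C) : cross (B - X) (C - X) = 0 ↔ X ∈ line[ℝ, B, C] := by
  rw [mem_affineSpan_pair_iff_exists_lineMap_eq]
  constructor
  · intro h
    have hCB : ‖C - B‖ ^ 2 ≠ 0 := by simpa [sub_eq_zero] using hBC.symm
    -- the parameter of the orthogonal projection of `X` onto the line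
    refine ⟨⟪X - B, C - B⟫ / ‖C - B‖ ^ 2, ?_⟩
    simp only [norm_sq_eq_fin_two, inner_eq_fin_two, PiLp.sub_apply] at hCB ⊢
    simp only [cross, PiLp.sub_apply] at h
    ext i
    fin_cases i <;>
      simp only [Fin.zero_eta, Fin.mk_one, AffineMap.lineMap_apply, vsub_eq_sub, vadd_eq_add,
        PiLp.add_apply, PiLp.smul_apply, PiLp.sub_apply, smul_eq_mul] <;>
      field_simp
    · linear_combination (C 1 - B 1) * h
    · linear_combination -(C 0 - B 0) * h
  · rintro ⟨s, rfl⟩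
    rw [cross_sub_lineMap]
    simp [cross]

theorem cross_mul_cross_neg_of_sOppSide {A B C D : EuclideanSpace ℝ (Fin 2)} (hBC : B ≠ C)
    (h : line[ℝ, B, C].SOppSide A D) : cross (B - A) (C - A) * cross (B - D) (C - D) < 0 := by
  have hD := mt (cross_sub_eq_zero_iff_mem_affineSpan_pair hBC).1 h.right_notMem
  obtain ⟨p, hp, hApD⟩ := h.exists_sbtw
  obtain ⟨t, ⟨ht₀, ht₁⟩, rfl⟩ := hApD.mem_image_Ioo
  have hcomb := (cross_sub_eq_zero_iff_mem_affineSpan_pair hBC).2 hp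
  rw [cross_sub_lineMap] at hcomb
  have hprod : (1 - t) * (cross (B - A) (C - A) * cross (B - D) (C - D)) =
      -(t * cross (B - D) (C - D) ^ 2) := by
    linear_combination cross (B - D) (C - D) * hcomb
  exact neg_of_mul_neg_right (hprod ▸ neg_neg_of_pos (mul_pos ht₀ (sq_pos_iff.2 hD)))
    (sub_nonneg.2 ht₁.le)

theorem cross_mul_power_eq {A B C D O : EuclideanSpace ℝ (Fin 2)} {r : ℝ}
    (hB : dist B O = r) (hC : dist C O = r) (hD : dist D O = r) :
    cross (B - D) (C - D) * (dist A O ^ 2 - r ^ 2) =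
      ⟪B - A, C - A⟫ * cross (B - D) (C - D) - cross (B - A) (C - A) * ⟪B - D, C - D⟫ := by
  have hsq (P : EuclideanSpace ℝ (Fin 2)) (hP : dist P O = r) :
      (P 0 - O 0) ^ 2 + (P 1 - O 1) ^ 2 = r ^ 2 := by
    rw [← dist_sq_eq_fin_two, hP]
  simp only [dist_sq_eq_fin_two, inner_eq_fin_two, cross, PiLp.sub_apply]
  linear_combination (norm := (simp only [cross, PiLp.sub_apply]; ring))
    cross (C - A) (D - A) * hsq B hB + cross (D - A) (B - A) * hsq C hC +
      cross (B - A) (C - A) * hsq D hD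

end EuclideanSpace

/-- With `X = P cos α`, `c₁ = P sin α`, `Y = S cos δ`, `c₂ = S sin δ` and `sin α sin δ < 0`, the
hypothesis `hw` says `w = P sin (δ - α) / sin δ`; the identity behind the proof is
`(S X + P Y) (P c₂ - S c₁) = (X c₂ - c₁ Y) (P S + X Y - c₁ c₂)`. -/
theorem mul_add_mul_neg_iff {X Y c₁ c₂ P S w : ℝ} (hP : 0 ≤ P) (hS : 0 ≤ S)
    (hP2 : P ^ 2 = X ^ 2 + c₁ ^ 2) (hS2 : S ^ 2 = Y ^ 2 + c₂ ^ 2) (hc : c₁ * c₂ < 0)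
    (hw : c₂ * w = X * c₂ - c₁ * Y) :
    S * X + P * Y < 0 ↔ w < 0 := by
  have hc₂ : 0 < c₂ ^ 2 := sq_pos_iff.2 (by rintro rfl; simp at hc)
  have hS_pos : 0 < S := hS.lt_of_ne (by rintro rfl; nlinarith)
  have hPS : |X| * |Y| + |c₁| * |c₂| ≤ P * S := by
    apply abs_le_of_sq_le_sq' _ (by positivity) |>.2
    nlinarith [sq_abs X, sq_abs Y, sq_abs c₁, sq_abs c₂, sq_nonneg (|X| * |c₂| - |c₁| * |Y|)]
  have hk : 0 < P * S + X * Y - c₁ * c₂ := by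
    have := abs_mul c₁ c₂ ▸ abs_of_neg hc
    nlinarith [neg_abs_le (X * Y), abs_mul X Y]
  have hm : 0 < (P * c₂ - S * c₁) * c₂ := by nlinarith
  have key : (S * X + P * Y) * ((P * c₂ - S * c₁) * c₂) =
      w * (c₂ ^ 2 * (P * S + X * Y - c₁ * c₂)) := by
    linear_combination (Y * c₂ ^ 2) * hP2 - (X * c₁ * c₂) * hS2 -
      (c₂ * (P * S + X * Y - c₁ * c₂)) * hw
  calc S * X + P * Y < 0
      ↔ (S * X + P * Y) * ((P * c₂ - S * c₁) * c₂) < 0 * ((P * c₂ - S * c₁) * c₂) :=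
        (mul_lt_mul_iff_of_pos_right hm).symm
    _ ↔ w * (c₂ ^ 2 * (P * S + X * Y - c₁ * c₂)) < 0 * (c₂ ^ 2 * (P * S + X * Y - c₁ * c₂)) := by
        rw [key, zero_mul, zero_mul]
    _ ↔ w < 0 := mul_lt_mul_iff_of_pos_right (mul_pos hc₂ hk)

theorem inside_circumcircle_iff_division_free_test_general
    (A B C D O : EuclideanSpace ℝ (Fin 2)) (r : ℝ)
    (hncol : ¬ Collinear ℝ ({B, C, D} : Set (EuclideanSpace ℝ (Fin 2))))
    (hB : dist B O = r) (hC : dist C O = r) (hD : dist D O = r)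
    (hside : (affineSpan ℝ ({B, C} : Set (EuclideanSpace ℝ (Fin 2)))).SOppSide A D) :
    dist A O < r ↔
      ‖B - D‖ * ‖C - D‖ * ⟪B - A, C - A⟫ + ‖B - A‖ * ‖C - A‖ * ⟪B - D, C - D⟫ < 0 := by
  have hBC : B ≠ C := by
    rintro rfl
    exact hncol (by simpa using collinear_pair ℝ B D)
  have hr : 0 ≤ r := hB ▸ dist_nonneg
  rw [← pow_lt_pow_iff_left₀ dist_nonneg hr two_ne_zero, ← sub_neg]
  refine (mul_add_mul_neg_iff (by positivity) (by positivity) ?_ ?_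
    (EuclideanSpace.cross_mul_cross_neg_of_sOppSide hBC hside)
    (EuclideanSpace.cross_mul_power_eq hB hC hD)).symm <;>
  rw [mul_pow, ← EuclideanSpace.inner_sq_add_cross_sq]

theorem inside_circumcircle_iff_division_free_test
    (A B C D O : EuclideanSpace ℝ (Fin 2)) (r : ℝ)
    (hncol : ¬ Collinear ℝ ({B, C, D} : Set (EuclideanSpace ℝ (Fin 2))))
    (hB : dist B O = r) (hC : dist C O = r) (hD : dist D O = r)
    (hAB : A ≠ B) (hAC : A ≠ C)
    (hside : (affineSpan ℝ ({B, C} : Set (EuclideanSpace ℝ (Fin 2)))).SOppSide A D) :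
    dist A O < r ↔
      ‖B - D‖ * ‖C - D‖ * ⟪B - A, C - A⟫ + ‖B - A‖ * ‖C - A‖ * ⟪B - D, C - D⟫ < 0 :=
  inside_circumcircle_iff_division_free_test_general A B C D O r hncol hB hC hD hside
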